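/- (Crucial edge case.) Let G ∈ Γ_{n,k} be strongly connected (every ordered pair of vertices is joined by a directed path) and let e = [ab] ∈ G be a crucial edge, i.e. the graph G∖e obtained by deleting e is not strongly connected. Then ∑_{H⊆G, e∉H} α(H) = 0 and ∑_{H⊆G, e∈H} α(H) = (−1)^k σ(G) = (−1)^{k+β₁(G)}. -/

import Mathlib

open Finset

open scoped Classical Nat

noncomputable section

/-- A directed graph with `n` labeled vertices and `k` labeled edges:
the `ℓ`-th edge is the ordered pair `G ℓ = (a, b)` (an edge from `a` to `b`; loops allowed). -/
abbrev DG (n k : ℕ) := Fin k → Fin n × Fin n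

namespace DG

variable {n k : ℕ}

/-- `step G S a b`: the subgraph of `G` with edge-label set `S` has an edge from `a` to `b`. -/
def step (G : DG n k) (S : Finset (Fin k)) (a b : Fin n) : Prop :=
  ∃ e ∈ S, G e = (a, b)

/-- The subgraph of `G` with edge-label set `S` contains no directed cycle. -/
def Acyclic (G : DG n k) (S : Finset (Fin k)) : Prop :=
  ∀ a : Fin n, ¬ Relation.TransGen (step G S) a a

/-- The edge `e` lies on a directed cycle of the subgraph of `G` with edge set `S`
(equivalently, there is a directed path from the head of `e` back to its tail). -/
def OnCycle (G : DG n k) (S : Finset (Fin k)) (e : Fin k) : Prop :=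
  Relation.ReflTransGen (step G S) (G e).2 (G e).1

/-- Strongly semiconnected: every edge lies on a directed cycle. -/
def SSC (G : DG n k) (S : Finset (Fin k)) : Prop :=
  ∀ e ∈ S, OnCycle G S e

/-- Strongly connected: every ordered pair of vertices is joined by a directed path. -/
def StronglyConnected (G : DG n k) (S : Finset (Fin k)) : Prop :=
  ∀ a b : Fin n, Relation.ReflTransGen (step G S) a b

/-- Adjacency in the underlying undirected graph. -/
def adj (G : DG n k) (S : Finset (Fin k)) (a b : Fin n) : Prop :=
  ∃ e ∈ S, G e = (a, b) ∨ G e = (b, a)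

/-- `β₀`: the number of connected components of the underlying undirected graph
(isolated vertices count as components). -/
def beta0 (G : DG n k) (S : Finset (Fin k)) : ℕ :=
  Nat.card (Quot (adj G S))

/-- `α(H) = (−1)^{#edges}` if `H` is acyclic, `0` otherwise. -/
def alpha (G : DG n k) (S : Finset (Fin k)) : ℤ :=
  if Acyclic G S then (-1) ^ S.card else 0

/-- `σ(H) = (−1)^{β₁}` if `H` is strongly semiconnected, `0` otherwise;
here `β₁ = #edges − n + β₀`, and `(−1)^{#edges − n + β₀} = (−1)^{#edges + n + β₀}`. -/
def sigma (G : DG n k) (S : Finset (Fin k)) : ℤ :=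
  if SSC G S then (-1) ^ (S.card + n + beta0 G S) else 0

/-- The vertex `v` is isolated: incident to no edge. -/
def isolated (G : DG n k) (v : Fin n) : Prop :=
  ∀ e : Fin k, (G e).1 ≠ v ∧ (G e).2 ≠ v

/-- The vertex `v` is a sink: no edge starts at it. -/
def isSink (G : DG n k) (v : Fin n) : Prop :=
  ∀ e : Fin k, (G e).1 ≠ v

end DG

/-!
Adding to a subgraph `T` an edge `f` that lies on no cycle of `T` keeps `T` acyclic, so it
flips the sign of `α`; hence `∑_{H ⊆ A} α(H) = 0` as soon as some edge of `A` lies on no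
cycle of `A`. If every edge of `G ∖ e` lay on a cycle, reachability in `G ∖ e` would be
symmetric, and `G ∖ e` would stay strongly connected; so for a crucial edge `e` the first sum
vanishes.

For the sum over all `H`: an acyclic `H` has a source, so
`∑_{U ⊆ sources H} (-1)^|U| α(H) = 0` for every `H`. Exchanging the two sums, `U` runs over the
vertex sets and `H` over the subgraphs with no edge into `U`. For `∅ ≠ U ≠ V` strong
connectivity gives an edge leaving `U`; it lies on no cycle of those subgraphs, since they have
no way back into `U`. So only `U = ∅` (the full sum) and `U = V` (only `H = ∅`) remain:
`∑_H α(H) = (-1)^(n+1)`. This is `(-1)^k σ(G)`, since `β₀(G) = 1`.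
-/

namespace DG

open Relation

variable {n k : ℕ} {G : DG n k}

lemma step_mono {S T : Finset (Fin k)} (h : S ⊆ T) : step G S ≤ step G T :=
  fun _ _ ⟨g, hg, hge⟩ => ⟨g, h hg, hge⟩

lemma step_of_mem {S : Finset (Fin k)} {g : Fin k} (hg : g ∈ S) : step G S (G g).1 (G g).2 :=
  ⟨g, hg, rfl⟩

lemma Acyclic.mono {S T : Finset (Fin k)} (h : S ⊆ T) (hT : Acyclic G T) : Acyclic G S :=
  fun a hc => hT a (TransGen.mono (step_mono h) a a hc)

lemma acyclic_empty : Acyclic G ∅ := fun _ h => by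
  obtain ⟨_, ⟨g, hg, -⟩, -⟩ := TransGen.head'_iff.mp h
  exact notMem_empty g hg

lemma alpha_empty : alpha G ∅ = 1 := by
  rw [alpha, if_pos acyclic_empty, card_empty, pow_zero]

lemma acyclic_iff_forall_not_onCycle {S : Finset (Fin k)} :
    Acyclic G S ↔ ∀ g ∈ S, ¬ OnCycle G S g := by
  refine ⟨fun h g hg hcyc => h _ (TransGen.head' (step_of_mem hg) hcyc), fun h a hcyc => ?_⟩
  obtain ⟨b, ⟨g, hg, hge⟩, hba⟩ := TransGen.head'_iff.mp hcyc
  exact h g hg (by simpa only [OnCycle, hge] using hba)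

lemma reflTransGen_step_insert {f : Fin k} {T : Finset (Fin k)} (hf : ¬ OnCycle G T f)
    {x y : Fin n} (h : ReflTransGen (step G (insert f T)) x y) :
    ReflTransGen (step G T) x y ∨
      ReflTransGen (step G T) x (G f).1 ∧ ReflTransGen (step G T) (G f).2 y := by
  induction h using ReflTransGen.head_induction_on with
  | refl => exact .inl .refl
  | head hxc _ ih =>
    obtain ⟨g, hg, hge⟩ := hxc
    rcases mem_insert.mp hg with rfl | hgT
    · obtain ⟨rfl, rfl⟩ := Prod.ext_iff.mp hge
      rcases ih with h | ⟨h, -⟩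
      · exact .inr ⟨.refl, h⟩
      · exact absurd h hf
    · rcases ih with h | ⟨h, h'⟩
      · exact .inl (h.head ⟨g, hgT, hge⟩)
      · exact .inr ⟨h.head ⟨g, hgT, hge⟩, h'⟩

lemma Acyclic.insert {f : Fin k} {T : Finset (Fin k)} (hT : Acyclic G T)
    (hf : ¬ OnCycle G T f) : Acyclic G (insert f T) := by
  rw [acyclic_iff_forall_not_onCycle] at hT ⊢
  intro g hg hcyc
  rcases reflTransGen_step_insert hf hcyc, mem_insert.mp hg with
    ⟨h | ⟨h, h'⟩, rfl | hgT⟩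
  · exact hf h
  · exact hT g hgT h
  · exact hf h
  · exact hf (h'.trans ((ReflTransGen.single (step_of_mem hgT)).trans h))

lemma alpha_insert {f : Fin k} {T : Finset (Fin k)} (hfT : f ∉ T) (hf : ¬ OnCycle G T f) :
    alpha G (insert f T) = -alpha G T := by
  by_cases hT : Acyclic G T
  · rw [alpha, alpha, if_pos hT, if_pos (hT.insert hf), card_insert_of_notMem hfT, pow_succ,
      mul_neg_one]
  · rw [alpha, alpha, if_neg hT, if_neg fun h => hT (h.mono (subset_insert f T)), neg_zero]

lemma sum_alpha_powerset_eq_zero {A : Finset (Fin k)} {f : Fin k} (hf : f ∈ A)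
    (hcyc : ¬ OnCycle G A f) : ∑ T ∈ A.powerset, alpha G T = 0 := by
  rw [← insert_erase hf, sum_powerset_insert (notMem_erase f A), ← sum_add_distrib]
  refine sum_eq_zero fun T hT => ?_
  have hTA : T ⊆ A.erase f := mem_powerset.mp hT
  rw [alpha_insert (fun h => notMem_erase f A (hTA h))
    (fun h => hcyc (ReflTransGen.mono (step_mono (hTA.trans (erase_subset f A))) _ _ h)),
    add_neg_cancel]

lemma SSC.reflTransGen_symm {S : Finset (Fin k)} (hS : SSC G S) {a b : Fin n}
    (h : ReflTransGen (step G S) a b) : ReflTransGen (step G S) b a := by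
  induction h with
  | refl => exact .refl
  | tail _ hbc ih =>
    obtain ⟨g, hg, hge⟩ := hbc
    have hcyc := hS g hg
    simp only [OnCycle, hge] at hcyc
    exact hcyc.trans ih

lemma reflTransGen_erase_of_reflTransGen_fst {S : Finset (Fin k)} {e : Fin k} {x : Fin n}
    (h : ReflTransGen (step G S) x (G e).1) : ReflTransGen (step G (S.erase e)) x (G e).1 := by
  induction h using ReflTransGen.head_induction_on with
  | refl => exact .refl
  | head hxc _ ih =>
    obtain ⟨g, hg, hge⟩ := hxc
    by_cases hge' : g = e
    · subst hge'
      rw [hge]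
    · exact ih.head ⟨g, mem_erase.mpr ⟨hge', hg⟩, hge⟩

lemma StronglyConnected.erase_of_SSC {S : Finset (Fin k)} {e : Fin k}
    (hS : StronglyConnected G S) (h : SSC G (S.erase e)) : StronglyConnected G (S.erase e) := by
  have he : ReflTransGen (step G (S.erase e)) (G e).1 (G e).2 :=
    h.reflTransGen_symm (reflTransGen_erase_of_reflTransGen_fst (hS _ _))
  intro a b
  refine reflTransGen_closed (fun x y ⟨g, hg, hge⟩ => ?_) a b (hS a b)
  by_cases hge' : g = e
  · subst hge'
    simpa only [hge] using he
  · exact .single ⟨g, mem_erase.mpr ⟨hge', hg⟩, hge⟩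

lemma exists_edge_leaving_of_reflTransGen {S : Finset (Fin k)} {U : Finset (Fin n)}
    {u v : Fin n} (h : ReflTransGen (step G S) u v) (hu : u ∈ U) (hv : v ∉ U) :
    ∃ g ∈ S, (G g).1 ∈ U ∧ (G g).2 ∉ U := by
  induction h with
  | refl => exact absurd hu hv
  | @tail b c _ hbc ih =>
    obtain ⟨g, hg, hge⟩ := hbc
    by_cases hb : b ∈ U
    · exact ⟨g, hg, by simpa only [hge] using And.intro hb hv⟩
    · exact ih hb

def sources (G : DG n k) (S : Finset (Fin k)) : Finset (Fin n) :=
  univ.filter fun v => ∀ g ∈ S, (G g).2 ≠ v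

def edgesWithHeadOutside (G : DG n k) (U : Finset (Fin n)) : Finset (Fin k) :=
  univ.filter fun g => (G g).2 ∉ U

@[simp]
lemma edgesWithHeadOutside_empty : edgesWithHeadOutside G ∅ = univ := by
  simp [edgesWithHeadOutside]

@[simp]
lemma edgesWithHeadOutside_univ : edgesWithHeadOutside G univ = ∅ := by
  simp [edgesWithHeadOutside]

lemma subset_sources_iff {U : Finset (Fin n)} {S : Finset (Fin k)} :
    U ⊆ sources G S ↔ S ⊆ edgesWithHeadOutside G U := by
  simp only [subset_iff, sources, edgesWithHeadOutside, mem_filter, mem_univ, true_and]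
  exact ⟨fun h g hg hgU => h hgU g hg rfl, fun h v hv g hg hgv => h hg (hgv ▸ hv)⟩

lemma Acyclic.sources_nonempty [Nonempty (Fin n)] {S : Finset (Fin k)} (hS : Acyclic G S) :
    (sources G S).Nonempty := by
  have : Std.Irrefl (TransGen (step G S)) := ⟨hS⟩
  obtain ⟨v, -, hv⟩ := (Finite.wellFounded_of_trans_of_irrefl (TransGen (step G S))).has_min
    Set.univ Set.univ_nonempty
  refine ⟨v, mem_filter.mpr ⟨mem_univ v, fun g hg hgv => ?_⟩⟩
  exact hv (G g).1 (Set.mem_univ _) (.single ⟨g, hg, Prod.ext rfl hgv⟩)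

lemma sum_alpha_powerset_edgesWithHeadOutside_eq_zero (hG : StronglyConnected G univ)
    {U : Finset (Fin n)} (hU : U.Nonempty) (hU' : U ≠ univ) :
    ∑ S ∈ (edgesWithHeadOutside G U).powerset, alpha G S = 0 := by
  obtain ⟨u, hu⟩ := hU
  obtain ⟨v, hv⟩ : ∃ v, v ∉ U := by simpa [eq_univ_iff_forall] using hU'
  obtain ⟨g, -, hgu, hgv⟩ := exists_edge_leaving_of_reflTransGen (hG u v) hu hv
  refine sum_alpha_powerset_eq_zero (f := g) (by simpa [edgesWithHeadOutside]) fun hcyc => ?_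
  rcases hcyc.cases_tail with hgg | ⟨c, -, g', hg', hge⟩
  · exact hgv (hgg ▸ hgu)
  · simp only [edgesWithHeadOutside, mem_filter, hge] at hg'
    exact hg'.2 hgu

lemma sum_alpha_of_stronglyConnected [Nonempty (Fin n)] (hG : StronglyConnected G univ) :
    ∑ S, alpha G S = (-1) ^ (n + 1) := by
  have hsrc (S : Finset (Fin k)) :
      ∑ U ∈ (sources G S).powerset, (-1) ^ U.card * alpha G S = 0 := by
    by_cases hS : Acyclic G S
    · rw [← sum_mul, sum_powerset_neg_one_pow_card_of_nonempty hS.sources_nonempty, zero_mul]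
    · simp [alpha, hS]
  have hswap : ∑ U : Finset (Fin n),
      (-1) ^ U.card * ∑ S ∈ (edgesWithHeadOutside G U).powerset, alpha G S = 0 := by
    simp_rw [mul_sum]
    rw [sum_comm' (t' := univ) (s' := fun S => (sources G S).powerset)
      fun U S => by simp [subset_sources_iff]]
    exact sum_eq_zero fun S _ => hsrc S
  rw [sum_eq_add_of_mem ∅ univ (mem_univ _) (mem_univ _) univ_nonempty.ne_empty.symm
    fun U _ hU => by rw [sum_alpha_powerset_edgesWithHeadOutside_eq_zero hG
      (nonempty_iff_ne_empty.mpr hU.1) hU.2, mul_zero]] at hswap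
  simp only [edgesWithHeadOutside_empty, edgesWithHeadOutside_univ, powerset_univ, powerset_empty,
    sum_singleton, alpha_empty, card_empty, card_univ, Fintype.card_fin, pow_zero, one_mul,
    mul_one] at hswap
  linear_combination hswap

lemma StronglyConnected.ssc {S : Finset (Fin k)} (hS : StronglyConnected G S) : SSC G S :=
  fun _ _ => hS _ _

lemma StronglyConnected.beta0_eq_one [Nonempty (Fin n)] {S : Finset (Fin k)}
    (hS : StronglyConnected G S) : beta0 G S = 1 := by
  rw [beta0, Nat.card_eq_one_iff_unique]
  refine ⟨⟨fun x y => ?_⟩, .map (Quot.mk _) inferInstance⟩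
  induction x using Quot.ind
  induction y using Quot.ind
  exact Quot.eqvGen_sound (EqvGen.mono (fun a b ⟨g, hg, hge⟩ => ⟨g, hg, .inl hge⟩)
    _ _ (EqvGen.reflTransGen_le_eqvGen _ _ _ (hS _ _)))

lemma StronglyConnected.neg_one_pow_mul_sigma (hG : StronglyConnected G univ) :
    (-1) ^ k * sigma G univ = (-1) ^ (n + beta0 G univ) := by
  rw [sigma, if_pos hG.ssc, card_univ, Fintype.card_fin, ← pow_add,
    show k + (k + n + beta0 G univ) = 2 * k + (n + beta0 G univ) by ring, pow_add, pow_mul,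
    neg_one_sq, one_pow, one_mul]

end DG

theorem crucial_edge_general (n k : ℕ) (G : DG n k) (e : Fin k)
    (hG : DG.StronglyConnected G Finset.univ)
    (hcr : ¬ DG.StronglyConnected G (Finset.univ.erase e)) :
    (∑ S ∈ Finset.univ.filter (fun S : Finset (Fin k) => e ∉ S), DG.alpha G S) = 0
    ∧ (∑ S ∈ Finset.univ.filter (fun S : Finset (Fin k) => e ∈ S), DG.alpha G S)
        = (-1) ^ k * DG.sigma G Finset.univ
    ∧ (-1 : ℤ) ^ k * DG.sigma G Finset.univ
        = (-1) ^ (n + DG.beta0 G Finset.univ) := by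
  have : Nonempty (Fin n) := ⟨(G e).1⟩
  obtain ⟨f, hf, hfc⟩ : ∃ f ∈ univ.erase e, ¬ DG.OnCycle G (univ.erase e) f := by
    simpa [DG.SSC] using fun h => hcr (hG.erase_of_SSC h)
  have hfilter : univ.filter (fun S : Finset (Fin k) => e ∉ S) = (univ.erase e).powerset := by
    ext S
    simp [subset_erase]
  have hnot : ∑ S ∈ univ.filter (fun S : Finset (Fin k) => e ∉ S), DG.alpha G S = 0 := by
    rw [hfilter]
    exact DG.sum_alpha_powerset_eq_zero hf hfc
  have htot := sum_filter_add_sum_filter_not univ (fun S : Finset (Fin k) => e ∈ S) (DG.alpha G)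
  rw [hnot, add_zero, DG.sum_alpha_of_stronglyConnected hG] at htot
  refine ⟨hnot, ?_, hG.neg_one_pow_mul_sigma⟩
  rw [htot, hG.neg_one_pow_mul_sigma, hG.beta0_eq_one]

/-- crucial edge case. Let `G` be strongly connected and `e` a crucial
edge (deleting `e` destroys strong connectivity). Then `∑_{H⊆G, e∉H} α(H) = 0` and
`∑_{H⊆G, e∈H} α(H) = (−1)^k σ(G) = (−1)^{k+β₁(G)}` (note
`(−1)^{k+β₁(G)} = (−1)^{n+β₀(G)}` since `β₁ = k − n + β₀`). -/
theorem crucial_edge (n k : ℕ) (hn : 1 ≤ n) (G : DG n k) (e : Fin k)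
    (hG : DG.StronglyConnected G Finset.univ)
    (hcr : ¬ DG.StronglyConnected G (Finset.univ.erase e)) :
    (∑ S ∈ Finset.univ.filter (fun S : Finset (Fin k) => e ∉ S), DG.alpha G S) = 0
    ∧ (∑ S ∈ Finset.univ.filter (fun S : Finset (Fin k) => e ∈ S), DG.alpha G S)
        = (-1) ^ k * DG.sigma G Finset.univ
    ∧ (-1 : ℤ) ^ k * DG.sigma G Finset.univ
        = (-1) ^ (n + DG.beta0 G Finset.univ) :=
  crucial_edge_general n k G e hG hcr
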